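/- Let K ⊂ ℝⁿ be a closed convex set containing the origin in its interior whose recession cone rec(K) is not full-dimensional. Then cl(conv(K̂)) = K*. -/

import Mathlib

open scoped BigOperators Pointwise

noncomputable section

/-- Euclidean space `ℝⁿ`. -/
abbrev E (n : ℕ) := EuclideanSpace ℝ (Fin n)

/-- Dot product on `ℝⁿ`. -/
def dot {n : ℕ} (x y : E n) : ℝ := ∑ i, x i * y i

/-- A point with integral coordinates. -/
def IsIntPt {n : ℕ} (x : E n) : Prop := ∀ i, ∃ m : ℤ, x i = (m : ℝ)

/-- A vector with rational coordinates. -/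
def IsRatVec {n : ℕ} (x : E n) : Prop := ∀ i, ∃ q : ℚ, x i = (q : ℝ)

/-- `S` is the set of integral points of a rational polyhedron `{x | Ax ≤ b}`. -/
def IsIntPtsOfRatPolyhedron {n : ℕ} (S : Set (E n)) : Prop :=
  ∃ (m : ℕ) (A : Fin m → E n) (b : Fin m → ℝ),
    (∀ i, IsRatVec (A i)) ∧ (∀ i, ∃ q : ℚ, b i = (q : ℝ)) ∧
    S = {x | IsIntPt x ∧ ∀ i, dot (A i) x ≤ b i}

/-- `dim S = n`: `S` contains `n+1` affinely independent points. -/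
def FullDimSet {n : ℕ} (S : Set (E n)) : Prop :=
  ∃ p : Fin (n + 1) → E n, (∀ i, p i ∈ S) ∧ AffineIndependent ℝ p

/-- `B` is `S`-free: the interior of `B` contains no point of `S`. -/
def SFree {n : ℕ} (S B : Set (E n)) : Prop := ∀ x ∈ interior B, x ∉ S

/-- `B` is a maximal `S`-free convex set. -/
def MaxSFree {n : ℕ} (S B : Set (E n)) : Prop :=
  Convex ℝ B ∧ SFree S B ∧
    ∀ C : Set (E n), Convex ℝ C → SFree S C → B ⊆ C → B = C

/-- `B` is lattice-free: no integral point in its interior. -/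
def LatticeFree {n : ℕ} (B : Set (E n)) : Prop := ∀ x ∈ interior B, ¬ IsIntPt x

/-- `B` is a maximal lattice-free convex set. -/
def MaxLatticeFree {n : ℕ} (B : Set (E n)) : Prop :=
  Convex ℝ B ∧ LatticeFree B ∧
    ∀ C : Set (E n), Convex ℝ C → LatticeFree C → B ⊆ C → B = C

/-- A polyhedron: finite intersection of closed half-spaces. -/
def IsPolyhedron {n : ℕ} (B : Set (E n)) : Prop :=
  ∃ (m : ℕ) (a : Fin m → E n) (c : Fin m → ℝ), B = {x | ∀ i, dot (a i) x ≤ c i}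

/-- A polytope: convex hull of finitely many points. -/
def IsPolytope {n : ℕ} (P : Set (E n)) : Prop :=
  ∃ V : Finset (E n), P = convexHull ℝ (V : Set (E n))

/-- Dimension of a set: dimension of its affine hull. -/
def sdim {n : ℕ} (A : Set (E n)) : ℕ := Module.finrank ℝ (affineSpan ℝ A).direction

/-- `F` is a face of the convex set `B`. -/
def IsFaceOf {n : ℕ} (F B : Set (E n)) : Prop :=
  F ⊆ B ∧ Convex ℝ F ∧ ∀ x ∈ B, ∀ y ∈ B, ∀ t : ℝ, 0 < t → t < 1 →
    t • x + (1 - t) • y ∈ F → x ∈ F ∧ y ∈ F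

/-- `F` is a facet of `B`: a nonempty face of dimension `dim B - 1`. -/
def IsFacetOf {n : ℕ} (F B : Set (E n)) : Prop :=
  IsFaceOf F B ∧ F.Nonempty ∧ sdim F + 1 = sdim B

/-- Recession cone of `K`. -/
def recCone {n : ℕ} (K : Set (E n)) : Set (E n) :=
  {d | ∀ x ∈ K, ∀ t : ℝ, 0 ≤ t → x + t • d ∈ K}

/-- Lineality space of `K`. -/
def linSpace {n : ℕ} (K : Set (E n)) : Set (E n) :=
  {d | d ∈ recCone K ∧ -d ∈ recCone K}

/-- The set of all finite nonnegative combinations of elements of `G`. -/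
def conicHullOf {n : ℕ} (G : Set (E n)) : Set (E n) :=
  {x | ∃ (m : ℕ) (c : Fin m → ℝ) (v : Fin m → E n),
    (∀ i, 0 ≤ c i) ∧ (∀ i, v i ∈ G) ∧ x = ∑ i, c i • v i}

/-- A cone is rational if it is generated by vectors with rational coordinates. -/
def IsRationalCone {n : ℕ} (C : Set (E n)) : Prop :=
  ∃ G : Set (E n), (∀ v ∈ G, IsRatVec v) ∧ C = conicHullOf G

/-- A linear subspace is rational if it is spanned by rational vectors. -/
def IsRationalSubspace {n : ℕ} (L : Submodule ℝ (E n)) : Prop :=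
  ∃ G : Set (E n), (∀ v ∈ G, IsRatVec v) ∧ L = Submodule.span ℝ G

/-- The hyperplane `{x | a·x = β}` is a supporting hyperplane of `C`. -/
def IsSupportingHyperplane {n : ℕ} (a : E n) (β : ℝ) (C : Set (E n)) : Prop :=
  ((∀ x ∈ C, dot a x ≤ β) ∨ (∀ x ∈ C, β ≤ dot a x)) ∧
    ∃ x ∈ closure C, dot a x = β

/-- `ψ` is a valid function with respect to `f` and `S`. -/
def ValidFn {n : ℕ} (S : Set (E n)) (f : E n) (ψ : E n → ℝ) : Prop :=
  ∀ s : (E n) →₀ ℝ, (∀ r, 0 ≤ s r) →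
    (f + s.sum fun r c => c • r) ∈ S →
    1 ≤ s.sum fun r c => ψ r * c

/-- Sublinear: positively homogeneous and subadditive. -/
def Sublinear {n : ℕ} (ψ : E n → ℝ) : Prop :=
  (∀ t : ℝ, 0 ≤ t → ∀ r, ψ (t • r) = t * ψ r) ∧
  (∀ r r', ψ (r + r') ≤ ψ r + ψ r')

/-- Polar of `K`. -/
def polar {n : ℕ} (K : Set (E n)) : Set (E n) := {y | ∀ r ∈ K, dot y r ≤ 1}

/-- `K̂ = {y ∈ K* | ∃ x ∈ K, x·y = 1}`. -/
def Khat {n : ℕ} (K : Set (E n)) : Set (E n) :=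
  {y | y ∈ polar K ∧ ∃ x ∈ K, dot x y = 1}

/-- `ρ_K(r) = sup { y·r | y ∈ K̂ }`. -/
def rho {n : ℕ} (K : Set (E n)) (r : E n) : ℝ :=
  sSup ((fun y => dot y r) '' Khat K)

/-!
For `c` with `c ∉ rec(K)`, the linear functional `⟪c, ·⟫` attains its maximum over the compact
set `K*` at a point of `K̂`: by the bipolar theorem `K** = K`, a maximum `≤ 0` would put `c` in
`rec(K)`, and a positive maximum `γ` puts `c / γ` in `K` with `⟪c / γ, y⟫ = 1`. Since `rec(K)` is
not full-dimensional, its complement is dense, so every `c` is approximated by such directions and,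
`K*` being bounded, the support functions of `K̂` and `K*` agree everywhere. Separation then gives
`K* ⊆ cl(conv(K̂))`.
-/

open RealInnerProductSpace Metric

theorem exists_inner_lt_of_notMem {F : Type*} [NormedAddCommGroup F] [InnerProductSpace ℝ F]
    [CompleteSpace F] {s : Set F} {x : F} (hconv : Convex ℝ s) (hcl : IsClosed s) (hx : x ∉ s) :
    ∃ (c : F) (u : ℝ), (∀ a ∈ s, ⟪c, a⟫ < u) ∧ u < ⟪c, x⟫ := by
  obtain ⟨f, u, hs, hux⟩ := geometric_hahn_banach_closed_point hconv hcl hx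
  refine ⟨(InnerProductSpace.toDual ℝ F).symm f, u, fun a ha => ?_, ?_⟩
  · simpa only [InnerProductSpace.toDual_symm_apply] using hs a ha
  · simpa only [InnerProductSpace.toDual_symm_apply] using hux

theorem dense_compl_of_affineSpan_ne_top {V : Type*} [NormedAddCommGroup V] [NormedSpace ℝ V]
    {s : Set V} (hs : affineSpan ℝ s ≠ ⊤) : Dense sᶜ := by
  rw [← interior_eq_empty_iff_dense_compl, ← Set.not_nonempty_iff_eq_empty]
  exact fun hint => hs <| top_unique <|
    (isOpen_interior.affineSpan_eq_top hint).ge.trans (affineSpan_mono ℝ interior_subset)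

section Polar

variable {n : ℕ} {K : Set (E n)}

theorem dot_eq_inner (x y : E n) : dot x y = ⟪x, y⟫ := by
  simp only [dot, PiLp.inner_apply, RCLike.inner_apply, conj_trivial, mul_comm]

theorem dot_comm (x y : E n) : dot x y = dot y x := by
  simp only [dot, mul_comm]

theorem mem_polar_iff {y : E n} : y ∈ polar K ↔ ∀ x ∈ K, ⟪y, x⟫ ≤ 1 := by
  simp only [polar, dot_eq_inner, Set.mem_ofPred_eq]

theorem zero_mem_polar (K : Set (E n)) : (0 : E n) ∈ polar K := by
  simp [mem_polar_iff]

theorem isClosed_polar (K : Set (E n)) : IsClosed (polar K) := by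
  have : polar K = ⋂ x ∈ K, {y : E n | ⟪y, x⟫ ≤ 1} := by
    ext y; simp [mem_polar_iff]
  rw [this]
  exact isClosed_biInter fun x _ => isClosed_le (by fun_prop) continuous_const

theorem convex_polar (K : Set (E n)) : Convex ℝ (polar K) := by
  intro y hy z hz a b ha hb hab
  rw [mem_polar_iff] at hy hz ⊢
  intro x hx
  rw [inner_add_left, real_inner_smul_left, real_inner_smul_left]
  nlinarith [hy x hx, hz x hx]

theorem polar_polar (hcl : IsClosed K) (hconv : Convex ℝ K) (h0 : (0 : E n) ∈ K) :
    polar (polar K) = K := by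
  refine Set.Subset.antisymm (fun x hx => ?_) fun x hx y hy => dot_comm y x ▸ hy x hx
  by_contra hxK
  obtain ⟨c, u, hK, hux⟩ := exists_inner_lt_of_notMem hconv hcl hxK
  have hu : 0 < u := by simpa using hK 0 h0
  have hcu : u⁻¹ • c ∈ polar K := by
    refine mem_polar_iff.2 fun a ha => ?_
    rw [real_inner_smul_left, inv_mul_le_iff₀ hu, mul_one]
    exact (hK a ha).le
  have := hx _ hcu
  rw [dot_comm, dot_eq_inner, real_inner_smul_left, inv_mul_le_iff₀ hu, mul_one] at this
  linarith

theorem norm_le_of_mem_polar {ρ : ℝ} (hρ : 0 < ρ) (hball : closedBall (0 : E n) ρ ⊆ K)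
    {y : E n} (hy : y ∈ polar K) : ‖y‖ ≤ ρ⁻¹ := by
  rcases eq_or_ne y 0 with rfl | hy0
  · simpa using hρ.le
  have hny : 0 < ‖y‖ := norm_pos_iff.2 hy0
  have hx : (ρ / ‖y‖) • y ∈ K := hball <| by
    rw [mem_closedBall_zero_iff, norm_smul, Real.norm_of_nonneg (by positivity),
      div_mul_cancel₀ _ hny.ne']
  have h1 := mem_polar_iff.1 hy _ hx
  rw [real_inner_smul_right, real_inner_self_eq_norm_sq] at h1
  have h2 : ρ / ‖y‖ * ‖y‖ ^ 2 = ‖y‖ * ρ := by field_simp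
  rw [← one_div, le_div_iff₀ hρ]
  linarith

theorem isCompact_polar (h0 : (0 : E n) ∈ interior K) : IsCompact (polar K) := by
  obtain ⟨ρ, hρ, hball⟩ := nhds_basis_closedBall.mem_iff.1 (mem_interior_iff_mem_nhds.1 h0)
  exact isCompact_of_isClosed_isBounded (isClosed_polar K)
    (isBounded_iff_forall_norm_le.2 ⟨ρ⁻¹, fun y hy => norm_le_of_mem_polar hρ hball hy⟩)

theorem mem_recCone_of_inner_nonpos (hK : polar (polar K) = K) {d : E n}
    (hd : ∀ y ∈ polar K, ⟪d, y⟫ ≤ 0) : d ∈ recCone K := by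
  intro x hx t ht
  rw [← hK] at hx ⊢
  intro y hy
  rw [dot_eq_inner, inner_add_left, real_inner_smul_left, ← dot_eq_inner]
  nlinarith [hx y hy, hd y hy]

theorem exists_mem_Khat_isMaxOn (hK : polar (polar K) = K) (hcomp : IsCompact (polar K))
    {d : E n} (hd : d ∉ recCone K) : ∃ y ∈ Khat K, IsMaxOn (fun z => ⟪d, z⟫) (polar K) y := by
  have hcont : Continuous fun z : E n => ⟪d, z⟫ := by fun_prop
  obtain ⟨y, hy, hmax⟩ := hcomp.exists_isMaxOn ⟨0, zero_mem_polar K⟩ hcont.continuousOn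
  have hγ : 0 < ⟪d, y⟫ := by
    by_contra! hγ
    exact hd (mem_recCone_of_inner_nonpos hK fun z hz => (hmax hz).trans hγ)
  refine ⟨y, ⟨hy, ⟪d, y⟫⁻¹ • d, ?_, ?_⟩, hmax⟩
  · rw [← hK]
    intro z hz
    rw [dot_eq_inner, real_inner_smul_left, inv_mul_le_iff₀ hγ, mul_one]
    exact hmax hz
  · rw [dot_eq_inner, real_inner_smul_left, inv_mul_cancel₀ hγ.ne']

theorem exists_mem_Khat_inner_gt (hcl : IsClosed K) (hconv : Convex ℝ K)
    (h0 : (0 : E n) ∈ interior K) (hrec : affineSpan ℝ (recCone K) ≠ ⊤) (c : E n)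
    {z : E n} (hz : z ∈ polar K) {ε : ℝ} (hε : 0 < ε) : ∃ y ∈ Khat K, ⟪c, z⟫ < ⟪c, y⟫ + ε := by
  obtain ⟨ρ, hρ, hball⟩ := nhds_basis_closedBall.mem_iff.1 (mem_interior_iff_mem_nhds.1 h0)
  have hK := polar_polar hcl hconv (interior_subset h0)
  obtain ⟨d, hd, hcd⟩ := (dense_compl_of_affineSpan_ne_top hrec).exists_dist_lt c
    (by positivity : 0 < ε * ρ / 2)
  obtain ⟨y, hy, hmax⟩ := exists_mem_Khat_isMaxOn hK (isCompact_polar h0) hd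
  have hperturb : ∀ w ∈ polar K, |⟪c, w⟫ - ⟪d, w⟫| < ε / 2 := by
    intro w hw
    rw [← inner_sub_left]
    calc |⟪c - d, w⟫| ≤ ‖c - d‖ * ‖w‖ := abs_real_inner_le_norm _ _
      _ ≤ ‖c - d‖ * ρ⁻¹ := by gcongr; exact norm_le_of_mem_polar hρ hball hw
      _ < ε * ρ / 2 * ρ⁻¹ := by gcongr; rwa [← dist_eq_norm]
      _ = ε / 2 := by field_simp
  refine ⟨y, hy, ?_⟩
  have hzy : ⟪d, z⟫ ≤ ⟪d, y⟫ := hmax hz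
  linarith [abs_lt.1 (hperturb z hz), abs_lt.1 (hperturb y hy.1)]

end Polar

/-- If K is closed convex with 0 in its interior and rec(K) is not
full-dimensional, then cl(conv(K̂)) = K*. -/
theorem stmt_16 {n : ℕ} (K : Set (E n)) (hcl : IsClosed K) (hconv : Convex ℝ K)
    (h0 : (0 : E n) ∈ interior K)
    (hrec : affineSpan ℝ (recCone K) ≠ ⊤) :
    closure (convexHull ℝ (Khat K)) = polar K := by
  refine (closure_minimal (convexHull_min (fun y hy => hy.1) (convex_polar K))
    (isClosed_polar K)).antisymm fun z hz => ?_
  by_contra hzC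
  obtain ⟨c, u, hC, hu⟩ :=
    exists_inner_lt_of_notMem (convex_convexHull ℝ _).closure isClosed_closure hzC
  obtain ⟨y, hy, hcy⟩ := exists_mem_Khat_inner_gt hcl hconv h0 hrec c hz (sub_pos.2 hu)
  linarith [hC y (subset_closure (subset_convexHull ℝ _ hy))]
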